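/- arXiv:1708.03091 — 4 statements merged into one kernel-verified Lean document; each statement's English description precedes it below -/
import Mathlib

section
/- Let ν > 0 and Φ₊, Φ₋ be real constants, and let c₊, c₋, E : [0,1] → ℝ be differentiable functions satisfying c₊′(x) = E(x)c₊(x) − Φ₊, c₋′(x) = −E(x)c₋(x) − Φ₋ and νE′(x) = c₊(x) − c₋(x) for all x ∈ [0,1]. Then the function x ↦ c₊(x) + c₋(x) − (ν/2)E(x)² + (Φ₊ + Φ₋)x is constant on [0,1]. -/
/-!
Along a solution, `(c₊ + c₋)′ = E (c₊ - c₋) - (Φ₊ + Φ₋) = ν E E′ - (Φ₊ + Φ₋)`, which is exactly the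
derivative of `(ν/2) E² - (Φ₊ + Φ₋) x`.
-/

theorem Convex.eq_of_hasDerivWithinAt_zero {E : Type*} [NormedAddCommGroup E] [NormedSpace ℝ E]
    {s : Set ℝ} (hs : Convex ℝ s) {f : ℝ → E} (hf : ∀ x ∈ s, HasDerivWithinAt f 0 s x)
    {x y : ℝ} (hx : x ∈ s) (hy : y ∈ s) : f x = f y := by
  have h := hs.norm_image_sub_le_of_norm_hasDerivWithin_le hf (fun _ _ => norm_zero.le) hx hy
  rw [zero_mul, norm_le_zero_iff, sub_eq_zero] at h
  exact h.symm

noncomputable def electrodiffusionFirstIntegral (ν Φp Φm : ℝ) (cp cm E : ℝ → ℝ) (x : ℝ) : ℝ :=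
  cp x + cm x - ν / 2 * E x ^ 2 + (Φp + Φm) * x

theorem hasDerivAt_electrodiffusionFirstIntegral {ν Φp Φm x : ℝ} {cp cm E : ℝ → ℝ} (hν : ν ≠ 0)
    (hcp : HasDerivAt cp (E x * cp x - Φp) x) (hcm : HasDerivAt cm (-(E x) * cm x - Φm) x)
    (hE : HasDerivAt E ((cp x - cm x) / ν) x) :
    HasDerivAt (electrodiffusionFirstIntegral ν Φp Φm cp cm E) 0 x := by
  have h : HasDerivAt (electrodiffusionFirstIntegral ν Φp Φm cp cm E) _ x :=
    ((hcp.add hcm).sub ((hE.pow 2).const_mul (ν / 2))).add ((hasDerivAt_id x).const_mul (Φp + Φm))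
  refine h.congr_deriv ?_
  field_simp
  ring

/-- first integral of the steady electrodiffusion system. -/
theorem electrodiffusion_first_integral
    (ν Φp Φm : ℝ) (hν : 0 < ν) (cp cm E : ℝ → ℝ)
    (hcp : ∀ x ∈ Set.Icc (0:ℝ) 1, HasDerivAt cp (E x * cp x - Φp) x)
    (hcm : ∀ x ∈ Set.Icc (0:ℝ) 1, HasDerivAt cm (-(E x) * cm x - Φm) x)
    (hE : ∀ x ∈ Set.Icc (0:ℝ) 1, HasDerivAt E ((cp x - cm x) / ν) x) :
    ∀ x ∈ Set.Icc (0:ℝ) 1, ∀ y ∈ Set.Icc (0:ℝ) 1,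
      cp x + cm x - ν / 2 * (E x) ^ 2 + (Φp + Φm) * x
        = cp y + cm y - ν / 2 * (E y) ^ 2 + (Φp + Φm) * y := by
  intro x hx y hy
  refine (convex_Icc (0:ℝ) 1).eq_of_hasDerivWithinAt_zero
    (f := electrodiffusionFirstIntegral ν Φp Φm cp cm E) (fun z hz => ?_) hx hy
  exact (hasDerivAt_electrodiffusionFirstIntegral hν.ne' (hcp z hz) (hcm z hz)
    (hE z hz)).hasDerivWithinAt
end

section
/- Let ν > 0 and Φ₊, Φ₋ be real constants, and let c₊, c₋, E : [0,1] → ℝ be differentiable functions satisfying the dimensionless steady-state electrodiffusion system on [0,1], together with the charge-neutral boundary conditions c₊(0) = c₋(0) = c₀ and c₊(1) = c₋(1) = c₁ for real constants c₀, c₁. Then Φ₊ + Φ₋ = 2(c₀ − c₁) + (ν/2)[E(1)² − E(0)²]. -/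
/-! Adding the two flux equations and using `ν E E' = E (c₊ - c₋)` shows that
`c₊ + c₋ - (ν/2) E²` has constant derivative `-(Φ₊ + Φ₋)` on `[0,1]`; comparing its values at the
two ends gives the total flux. -/

open Set

theorem sub_eq_smul_of_hasDerivAt_const {F : Type*} [NormedAddCommGroup F] [NormedSpace ℝ F]
    [CompleteSpace F] {f : ℝ → F} {k : F} {a b : ℝ} (hf : ∀ x ∈ uIcc a b, HasDerivAt f k x) :
    f b - f a = (b - a) • k := by
  rw [← intervalIntegral.integral_eq_sub_of_hasDerivAt hf intervalIntegrable_const,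
    intervalIntegral.integral_const]

theorem hasDerivAt_electrodiffusion_invariant {ν Φp Φm x : ℝ} (hν : ν ≠ 0) {cp cm E : ℝ → ℝ}
    (hcp : HasDerivAt cp (E x * cp x - Φp) x) (hcm : HasDerivAt cm (-(E x) * cm x - Φm) x)
    (hE : HasDerivAt E ((cp x - cm x) / ν) x) :
    HasDerivAt (fun y => cp y + cm y - ν / 2 * E y ^ 2) (-(Φp + Φm)) x := by
  refine ((hcp.add hcm).sub ((hE.pow 2).const_mul (ν / 2))).congr_deriv ?_
  field_simp
  ring

/-- total flux in terms of boundary field values. -/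
theorem electrodiffusion_flux_sum
    (ν Φp Φm c₀ c₁ : ℝ) (hν : 0 < ν) (cp cm E : ℝ → ℝ)
    (hcp : ∀ x ∈ Set.Icc (0:ℝ) 1, HasDerivAt cp (E x * cp x - Φp) x)
    (hcm : ∀ x ∈ Set.Icc (0:ℝ) 1, HasDerivAt cm (-(E x) * cm x - Φm) x)
    (hE : ∀ x ∈ Set.Icc (0:ℝ) 1, HasDerivAt E ((cp x - cm x) / ν) x)
    (hbc0p : cp 0 = c₀) (hbc0m : cm 0 = c₀)
    (hbc1p : cp 1 = c₁) (hbc1m : cm 1 = c₁) :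
    Φp + Φm = 2 * (c₀ - c₁) + ν / 2 * ((E 1) ^ 2 - (E 0) ^ 2) := by
  have hinvariant := sub_eq_smul_of_hasDerivAt_const (a := 0) (b := 1) fun x hx => by
    rw [uIcc_of_le zero_le_one] at hx
    exact hasDerivAt_electrodiffusion_invariant hν.ne' (hcp x hx) (hcm x hx) (hE x hx)
  simp only [hbc0p, hbc0m, hbc1p, hbc1m, sub_zero, one_smul] at hinvariant
  linarith
end

section
/- Let ν > 0 and Φ₊, Φ₋ be real constants, and let c₊, c₋, E : [0,1] → ℝ be differentiable functions satisfying the dimensionless steady-state electrodiffusion system on [0,1], together with the charge-neutral boundary conditions c₊(0) = c₋(0) = c₀ and c₊(1) = c₋(1) = c₁. Then for every x ∈ [0,1], c₊(x) = (ν/4)E(x)² + {(c₁ − c₀) + (ν/4)[E(0)² − E(1)²]}x + c₀ − (ν/4)E(0)² + (ν/2)E′(x), and c₋(x) = (ν/4)E(x)² + {(c₁ − c₀) + (ν/4)[E(0)² − E(1)²]}x + c₀ − (ν/4)E(0)² − (ν/2)E′(x). -/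
/-!
Adding the two Nernst–Planck equations and using Gauss's law `ν E' = c₊ - c₋` gives
`(c₊ + c₋)' = E (c₊ - c₋) - (Φ₊ + Φ₋) = (ν/2 · E²)' - (Φ₊ + Φ₋)`, so `c₊ + c₋ - ν/2 · E²` is affine;
its two endpoint values are fixed by the charge-neutral boundary conditions. Adding and
subtracting Gauss's law recovers `c₊` and `c₋` separately.
-/

open Set

theorem eq_add_mul_sub_of_hasDerivAt_const {f : ℝ → ℝ} {a b c : ℝ}
    (hf : ∀ x ∈ Icc a b, HasDerivAt f c x) :
    ∀ x ∈ Icc a b, f x = f a + c * (x - a) := by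
  have hline : ∀ x, HasDerivAt (fun y => f a + c * (y - a)) c x := fun x => by
    simpa using ((hasDerivAt_id x).sub_const a).const_mul c |>.const_add (f a)
  refine eq_of_has_deriv_right_eq (f' := fun _ => c)
    (fun x hx => (hf x (Ico_subset_Icc_self hx)).hasDerivWithinAt)
    (fun x _ => (hline x).hasDerivWithinAt)
    (fun x hx => (hf x hx).continuousAt.continuousWithinAt)
    (fun x _ => (hline x).continuousAt.continuousWithinAt) (by simp)

theorem hasDerivAt_total_concentration_sub_field_energy {ν Φp Φm x E'x : ℝ} {cp cm E : ℝ → ℝ}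
    (hcp : HasDerivAt cp (E x * cp x - Φp) x) (hcm : HasDerivAt cm (-(E x) * cm x - Φm) x)
    (hE : HasDerivAt E E'x x) (hGauss : ν * E'x = cp x - cm x) :
    HasDerivAt (fun y => cp y + cm y - ν / 2 * E y ^ 2) (-(Φp + Φm)) x := by
  refine ((hcp.add hcm).sub ((hE.pow 2).const_mul (ν / 2))).congr_deriv ?_
  push_cast
  linear_combination -E x * hGauss

theorem electrodiffusion_concentration_formulas_general
    (ν Φp Φm c₀ c₁ : ℝ) (cp cm E E' : ℝ → ℝ)
    (hcp : ∀ x ∈ Set.Icc (0:ℝ) 1, HasDerivAt cp (E x * cp x - Φp) x)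
    (hcm : ∀ x ∈ Set.Icc (0:ℝ) 1, HasDerivAt cm (-(E x) * cm x - Φm) x)
    (hE : ∀ x ∈ Set.Icc (0:ℝ) 1, HasDerivAt E (E' x) x)
    (hE' : ∀ x ∈ Set.Icc (0:ℝ) 1, ν * E' x = cp x - cm x)
    (hbc0p : cp 0 = c₀) (hbc0m : cm 0 = c₀)
    (hbc1p : cp 1 = c₁) (hbc1m : cm 1 = c₁) :
    ∀ x ∈ Set.Icc (0:ℝ) 1,
      cp x = ν / 4 * (E x) ^ 2
          + ((c₁ - c₀) + ν / 4 * ((E 0) ^ 2 - (E 1) ^ 2)) * x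
          + c₀ - ν / 4 * (E 0) ^ 2 + ν / 2 * E' x ∧
      cm x = ν / 4 * (E x) ^ 2
          + ((c₁ - c₀) + ν / 4 * ((E 0) ^ 2 - (E 1) ^ 2)) * x
          + c₀ - ν / 4 * (E 0) ^ 2 - ν / 2 * E' x := by
  have haffine := eq_add_mul_sub_of_hasDerivAt_const fun x hx =>
    hasDerivAt_total_concentration_sub_field_energy (hcp x hx) (hcm x hx) (hE x hx) (hE' x hx)
  intro x hx
  have hx_val := haffine x hx
  have h1_val := haffine 1 (right_mem_Icc.2 zero_le_one)
  have hGauss := hE' x hx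
  simp only [hbc0p, hbc0m, hbc1p, hbc1m, sub_zero, mul_one] at hx_val h1_val
  constructor
  · linear_combination (hx_val - x * h1_val - hGauss) / 2
  · linear_combination (hx_val - x * h1_val + hGauss) / 2

/-- concentrations expressed in terms of the field and its derivative. -/
theorem electrodiffusion_concentration_formulas
    (ν Φp Φm c₀ c₁ : ℝ) (hν : 0 < ν) (cp cm E E' : ℝ → ℝ)
    (hcp : ∀ x ∈ Set.Icc (0:ℝ) 1, HasDerivAt cp (E x * cp x - Φp) x)
    (hcm : ∀ x ∈ Set.Icc (0:ℝ) 1, HasDerivAt cm (-(E x) * cm x - Φm) x)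
    (hE : ∀ x ∈ Set.Icc (0:ℝ) 1, HasDerivAt E (E' x) x)
    (hE' : ∀ x ∈ Set.Icc (0:ℝ) 1, ν * E' x = cp x - cm x)
    (hbc0p : cp 0 = c₀) (hbc0m : cm 0 = c₀)
    (hbc1p : cp 1 = c₁) (hbc1m : cm 1 = c₁) :
    ∀ x ∈ Set.Icc (0:ℝ) 1,
      cp x = ν / 4 * (E x) ^ 2
          + ((c₁ - c₀) + ν / 4 * ((E 0) ^ 2 - (E 1) ^ 2)) * x
          + c₀ - ν / 4 * (E 0) ^ 2 + ν / 2 * E' x ∧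
      cm x = ν / 4 * (E x) ^ 2
          + ((c₁ - c₀) + ν / 4 * ((E 0) ^ 2 - (E 1) ^ 2)) * x
          + c₀ - ν / 4 * (E 0) ^ 2 - ν / 2 * E' x :=
  electrodiffusion_concentration_formulas_general ν Φp Φm c₀ c₁ cp cm E E' hcp hcm hE hE' hbc0p
    hbc0m hbc1p hbc1m
end

section
/- Let ν > 0 and Φ₊, Φ₋ be real constants, let c₊, c₋ : [0,1] → ℝ be differentiable and E : [0,1] → ℝ be twice differentiable, satisfying the dimensionless steady-state electrodiffusion system on [0,1] and the boundary condition c₊(0) = c₋(0) = c₀ at the left face only. Then for every x ∈ [0,1], νE″(x) = (ν/2)E(x)³ + [2c₀ − (ν/2)E(0)² − (Φ₊ + Φ₋)x]E(x) − (Φ₊ − Φ₋). -/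
/-!
Adding the two Nernst–Planck equations and using Poisson's equation `ν E' = c₊ - c₋` shows that
`c₊ + c₋ - (ν/2) E² + (Φ₊ + Φ₋) x` has zero derivative, so it keeps its value `2 c₀ - (ν/2) E(0)²`
from the left face. Differentiating Poisson's equation gives `ν E'' = E (c₊ + c₋) - (Φ₊ - Φ₋)`, and
substituting the first integral for `c₊ + c₋` yields the Painlevé II-type equation.
-/

open Set

noncomputable def electrodiffusionInvariant (ν Φp Φm : ℝ) (cp cm E : ℝ → ℝ) (x : ℝ) : ℝ :=
  cp x + cm x - ν / 2 * E x ^ 2 + (Φp + Φm) * x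

section

variable {ν Φp Φm x : ℝ} {cp cm E E' : ℝ → ℝ}

theorem hasDerivAt_electrodiffusionInvariant
    (hcp : HasDerivAt cp (E x * cp x - Φp) x) (hcm : HasDerivAt cm (-(E x) * cm x - Φm) x)
    (hE : HasDerivAt E (E' x) x) (hE' : ν * E' x = cp x - cm x) :
    HasDerivAt (electrodiffusionInvariant ν Φp Φm cp cm E) 0 x := by
  have h := ((hcp.add hcm).sub ((hE.pow 2).const_mul (ν / 2))).add
    ((hasDerivAt_id x).const_mul (Φp + Φm))
  refine h.congr_deriv ?_
  simp only [Nat.cast_ofNat, mul_one]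
  linear_combination -(E x) * hE'

theorem electrodiffusionInvariant_eq_left {a b : ℝ}
    (hcp : ∀ x ∈ Icc a b, HasDerivAt cp (E x * cp x - Φp) x)
    (hcm : ∀ x ∈ Icc a b, HasDerivAt cm (-(E x) * cm x - Φm) x)
    (hE : ∀ x ∈ Icc a b, HasDerivAt E (E' x) x)
    (hE' : ∀ x ∈ Icc a b, ν * E' x = cp x - cm x) :
    ∀ x ∈ Icc a b,
      electrodiffusionInvariant ν Φp Φm cp cm E x = electrodiffusionInvariant ν Φp Φm cp cm E a := by
  have hderiv : ∀ x ∈ Icc a b, HasDerivAt (electrodiffusionInvariant ν Φp Φm cp cm E) 0 x :=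
    fun x hx => hasDerivAt_electrodiffusionInvariant (hcp x hx) (hcm x hx) (hE x hx) (hE' x hx)
  exact constant_of_has_deriv_right_zero
    (fun x hx => (hderiv x hx).continuousAt.continuousWithinAt)
    (fun x hx => (hderiv x (Ico_subset_Icc_self hx)).hasDerivWithinAt)

end

theorem HasDerivAt.deriv_eq_of_eqOn_Icc {f g : ℝ → ℝ} {f' g' a b x : ℝ} (hab : a < b)
    (hfg : EqOn f g (Icc a b)) (hx : x ∈ Icc a b) (hf : HasDerivAt f f' x)
    (hg : HasDerivAt g g' x) : f' = g' :=
  (uniqueDiffOn_Icc hab x hx).eq_deriv _ hf.hasDerivWithinAt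
    (hg.hasDerivWithinAt.congr hfg (hfg hx))

theorem electrodiffusion_painleve_left_bc_general
    (ν Φp Φm c₀ : ℝ) (cp cm E E' E'' : ℝ → ℝ)
    (hcp : ∀ x ∈ Set.Icc (0:ℝ) 1, HasDerivAt cp (E x * cp x - Φp) x)
    (hcm : ∀ x ∈ Set.Icc (0:ℝ) 1, HasDerivAt cm (-(E x) * cm x - Φm) x)
    (hE : ∀ x ∈ Set.Icc (0:ℝ) 1, HasDerivAt E (E' x) x)
    (hE' : ∀ x ∈ Set.Icc (0:ℝ) 1, ν * E' x = cp x - cm x)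
    (hE'' : ∀ x ∈ Set.Icc (0:ℝ) 1, HasDerivAt E' (E'' x) x)
    (hbc0p : cp 0 = c₀) (hbc0m : cm 0 = c₀) :
    ∀ x ∈ Set.Icc (0:ℝ) 1,
      ν * E'' x = ν / 2 * (E x) ^ 3
        + (2 * c₀ - ν / 2 * (E 0) ^ 2 - (Φp + Φm) * x) * E x
        - (Φp - Φm) := by
  intro x hx
  have hfirst := electrodiffusionInvariant_eq_left hcp hcm hE hE' x hx
  have hpoisson : ν * E'' x = (E x * cp x - Φp) - (-(E x) * cm x - Φm) :=
    HasDerivAt.deriv_eq_of_eqOn_Icc zero_lt_one hE' hx ((hE'' x hx).const_mul ν)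
      ((hcp x hx).sub (hcm x hx))
  simp only [electrodiffusionInvariant, hbc0p, hbc0m] at hfirst
  linear_combination hpoisson + E x * hfirst

/-- the Painlevé II-type ODE for the field, using only the left
boundary condition. -/
theorem electrodiffusion_painleve_left_bc
    (ν Φp Φm c₀ : ℝ) (hν : 0 < ν) (cp cm E E' E'' : ℝ → ℝ)
    (hcp : ∀ x ∈ Set.Icc (0:ℝ) 1, HasDerivAt cp (E x * cp x - Φp) x)
    (hcm : ∀ x ∈ Set.Icc (0:ℝ) 1, HasDerivAt cm (-(E x) * cm x - Φm) x)
    (hE : ∀ x ∈ Set.Icc (0:ℝ) 1, HasDerivAt E (E' x) x)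
    (hE' : ∀ x ∈ Set.Icc (0:ℝ) 1, ν * E' x = cp x - cm x)
    (hE'' : ∀ x ∈ Set.Icc (0:ℝ) 1, HasDerivAt E' (E'' x) x)
    (hbc0p : cp 0 = c₀) (hbc0m : cm 0 = c₀) :
    ∀ x ∈ Set.Icc (0:ℝ) 1,
      ν * E'' x = ν / 2 * (E x) ^ 3
        + (2 * c₀ - ν / 2 * (E 0) ^ 2 - (Φp + Φm) * x) * E x
        - (Φp - Φm) :=
  electrodiffusion_painleve_left_bc_general ν Φp Φm c₀ cp cm E E' E'' hcp hcm hE hE' hE'' hbc0p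
    hbc0m
end
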